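/- Let k, m be positive integers and z, w, u points in the open unit ball B of ℂ^n. Then 1/(1 - ⟨z,u⟩)^m = ∑_{j=0}^{k} (conjugate of R^{m-1}_{1,u} applied in the u-variable to) (⟨z-w,u⟩)^j/(1-⟨w,u⟩)^{j+1} + (conjugate of R^{m-1}_{1,u} applied to) (⟨z-w,u⟩)^{k+1}/((1-⟨z,u⟩)(1-⟨w,u⟩)^{k+1}), where ⟨z,u⟩ = ∑_j z_j conj(u_j). -/

import Mathlib

/-!
Conjugation turns `R̄` into the holomorphic radial derivative `R`, so
`R̄^{m-1}_1 g = conj (R^{m-1}_1 (conj ∘ g))`, and the conjugates of all functions in the statement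
are rational in the linear forms `a = conj ⟨z, ·⟩`, `b = conj ⟨w, ·⟩`, holomorphic near `u`.
There `R^k_t` is additive and local, so it can be applied termwise to the scalar Taylor identity
`1/(1-a) = ∑_{j ≤ k} (a-b)^j/(1-b)^{j+1} + (a-b)^{k+1}/((1-a)(1-b)^{k+1})`, valid near `u`.
Finally `R (1-a)^{-s} = s a (1-a)^{-s-1}`, so each factor `1 + R/(s+j)` raises the exponent of
`(1-a)^{-s-j}` by one, and `R^{m-1}_1 (1-a)^{-1} = (1-a)^{-m}`.
-/

open Metric

noncomputable section

/-- `ℂⁿ` with the Euclidean norm. -/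
abbrev En (n : ℕ) := EuclideanSpace ℂ (Fin n)

/-- The pairing `⟨z,u⟩ = ∑_j z_j conj(u_j)`. -/
def bip {n : ℕ} (z u : En n) : ℂ := ∑ j, z j * (starRingEnd ℂ) (u j)

/-- The conjugate radial derivative `R̄ g(u) = ∑_j conj(u_j) ∂g/∂conj(u_j)(u)`,
expressed as `conj (R (conj ∘ g))(u)`. -/
def RbarRad {n : ℕ} (g : En n → ℂ) (u : En n) : ℂ :=
  (starRingEnd ℂ) (fderiv ℂ (fun v => (starRingEnd ℂ) (g v)) u u)

/-- The iterated conjugated operators `R̄^k_t = (1 + R̄/(t+k-1)) ⋯ (1 + R̄/t)`. -/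
def RkBar {n : ℕ} : ℕ → ℝ → (En n → ℂ) → (En n → ℂ)
  | 0, _, g => g
  | (k+1), t, g => fun u =>
      RkBar k t g u + (1 / ((t : ℂ) + (k : ℂ))) * RbarRad (RkBar k t g) u

open Filter Topology

section Radial

variable (𝕜 : Type*) {E F : Type*} [NontriviallyNormedField 𝕜] [NormedAddCommGroup E]
  [NormedSpace 𝕜 E] [NormedAddCommGroup F] [NormedSpace 𝕜 F]

def radialDeriv (f : E → F) (v : E) : F := fderiv 𝕜 f v v

variable {𝕜}

/-- `radialOp t k` is the operator `R^k_t = (1 + R/(t+k-1)) ⋯ (1 + R/t)`. -/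
def radialOp (t : 𝕜) : ℕ → (E → F) → E → F
  | 0, f => f
  | k + 1, f => radialOp t k f + (t + k)⁻¹ • radialDeriv 𝕜 (radialOp t k f)

variable {f g : E → F} {u : E}

theorem Filter.EventuallyEq.radialDeriv (h : f =ᶠ[𝓝 u] g) :
    radialDeriv 𝕜 f =ᶠ[𝓝 u] radialDeriv 𝕜 g := by
  filter_upwards [h.eventuallyEq_nhds] with v hv
  simp only [_root_.radialDeriv, hv.fderiv_eq]

theorem radialDeriv_add (hf : DifferentiableAt 𝕜 f u) (hg : DifferentiableAt 𝕜 g u) :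
    radialDeriv 𝕜 (f + g) u = radialDeriv 𝕜 f u + radialDeriv 𝕜 g u := by
  simp only [radialDeriv, fderiv_add hf hg, add_apply]

@[simp]
theorem radialDeriv_zero : radialDeriv 𝕜 (0 : E → F) = 0 := by
  ext v
  simp [radialDeriv]

theorem AnalyticAt.radialDeriv [CompleteSpace F] (hf : AnalyticAt 𝕜 f u) :
    AnalyticAt 𝕜 (radialDeriv 𝕜 f) u :=
  ((ContinuousLinearMap.apply 𝕜 F).analyticAt_bilinear (u, fderiv 𝕜 f u)).comp₂
    analyticAt_id hf.fderiv

theorem radialDeriv_inv_one_sub_pow (ℓ : E →L[𝕜] 𝕜) (s : ℕ) (hu : ℓ u ≠ 1) :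
    radialDeriv 𝕜 (fun v => ((1 - ℓ v) ^ s)⁻¹) u = s * ((1 - ℓ u) ^ (s + 1))⁻¹ * ℓ u := by
  have hne : 1 - ℓ u ≠ 0 := sub_ne_zero.mpr hu.symm
  have hderiv : HasDerivAt (fun x : 𝕜 => ((1 - x) ^ s)⁻¹)
      (s * ((1 - ℓ u) ^ (s + 1))⁻¹) (ℓ u) := by
    refine ((((hasDerivAt_id' (ℓ u)).const_sub 1).fun_pow s).fun_inv
      (pow_ne_zero s hne)).congr_deriv ?_
    rcases s with _ | s
    · simp
    · rw [Nat.add_sub_cancel]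
      field_simp
      ring
  have hcomp : HasFDerivAt (fun v => ((1 - ℓ v) ^ s)⁻¹)
      ((s * ((1 - ℓ u) ^ (s + 1))⁻¹) • ℓ) u := hderiv.comp_hasFDerivAt u ℓ.hasFDerivAt
  simp [radialDeriv, hcomp.fderiv]

variable (t : 𝕜)

theorem Filter.EventuallyEq.radialOp (h : f =ᶠ[𝓝 u] g) (k : ℕ) :
    radialOp t k f =ᶠ[𝓝 u] radialOp t k g := by
  induction k with
  | zero => exact h
  | succ k ih =>
    filter_upwards [ih, ih.radialDeriv (𝕜 := 𝕜)] with v hv hv'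
    simp only [_root_.radialOp, Pi.add_apply, Pi.smul_apply, hv, hv']

theorem AnalyticAt.radialOp [CompleteSpace F] (hf : AnalyticAt 𝕜 f u) (k : ℕ) :
    AnalyticAt 𝕜 (radialOp t k f) u := by
  induction k with
  | zero => exact hf
  | succ k ih => exact ih.add ih.radialDeriv.const_smul

@[simp]
theorem radialOp_zero_fun (k : ℕ) : radialOp t k (0 : E → F) = 0 := by
  induction k with
  | zero => rfl
  | succ k ih => simp [radialOp, ih]

theorem radialOp_add [CompleteSpace F] (hf : AnalyticAt 𝕜 f u) (hg : AnalyticAt 𝕜 g u)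
    (k : ℕ) : radialOp t k (f + g) =ᶠ[𝓝 u] radialOp t k f + radialOp t k g := by
  induction k with
  | zero => rfl
  | succ k ih =>
    filter_upwards [ih, ih.radialDeriv (𝕜 := 𝕜), (hf.radialOp t k).eventually_analyticAt,
      (hg.radialOp t k).eventually_analyticAt] with v hv hv' hfv hgv
    simp only [_root_.radialOp, Pi.add_apply, Pi.smul_apply, hv, hv',
      radialDeriv_add hfv.differentiableAt hgv.differentiableAt, smul_add]
    abel

theorem radialOp_sum [CompleteSpace F] {ι : Type*} (s : Finset ι) {f : ι → E → F}
    (hf : ∀ i ∈ s, AnalyticAt 𝕜 (f i) u) (k : ℕ) :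
    radialOp t k (∑ i ∈ s, f i) =ᶠ[𝓝 u] ∑ i ∈ s, radialOp t k (f i) := by
  classical
  induction s using Finset.induction with
  | empty => simp
  | insert a s ha ih =>
    have hs : ∀ i ∈ s, AnalyticAt 𝕜 (f i) u := fun i hi => hf i (Finset.mem_insert_of_mem hi)
    rw [Finset.sum_insert ha, Finset.sum_insert ha]
    filter_upwards [radialOp_add t (hf a (Finset.mem_insert_self a s))
      (Finset.analyticAt_sum s hs) k, ih hs] with v hv hv'
    simp only [Pi.add_apply, hv, hv']

theorem radialOp_inv_one_sub_pow [CharZero 𝕜] (ℓ : E →L[𝕜] 𝕜) {s : ℕ} (hs : s ≠ 0) (k : ℕ)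
    (hu : ℓ u ≠ 1) :
    radialOp (s : 𝕜) k (fun v => ((1 - ℓ v) ^ s)⁻¹) u = ((1 - ℓ u) ^ (s + k))⁻¹ := by
  induction k generalizing u with
  | zero => rfl
  | succ k ih =>
    have hev : radialOp (s : 𝕜) k (fun v => ((1 - ℓ v) ^ s)⁻¹) =ᶠ[𝓝 u]
        fun v => ((1 - ℓ v) ^ (s + k))⁻¹ := by
      filter_upwards [ℓ.continuous.continuousAt.eventually_ne hu] with v hv using ih hv
    have hne : 1 - ℓ u ≠ 0 := sub_ne_zero.mpr hu.symm
    have hsk : (s : 𝕜) + k ≠ 0 := by exact_mod_cast (by omega : s + k ≠ 0)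
    rw [radialOp, Pi.add_apply, Pi.smul_apply, ih hu, (hev.radialDeriv (𝕜 := 𝕜)).eq_of_nhds,
      radialDeriv_inv_one_sub_pow ℓ (s + k) hu, smul_eq_mul]
    push_cast
    field_simp
    ring

end Radial

theorem inv_one_sub_eq_sum_add {K : Type*} [Field K] {a b : K} (ha : 1 - a ≠ 0)
    (hb : 1 - b ≠ 0) (k : ℕ) :
    (1 - a)⁻¹ = ∑ j ∈ Finset.range (k + 1), (a - b) ^ j / (1 - b) ^ (j + 1) +
      (a - b) ^ (k + 1) / ((1 - a) * (1 - b) ^ (k + 1)) := by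
  induction k with
  | zero =>
    rw [zero_add, Finset.sum_range_one]
    field_simp
    ring
  | succ k ih =>
    rw [ih, Finset.sum_range_succ _ (k + 1), add_assoc]
    congr 1
    field_simp
    ring

theorem radialOp_taylor_expansion {𝕜 E : Type*} [NontriviallyNormedField 𝕜] [CompleteSpace 𝕜]
    [CharZero 𝕜] [NormedAddCommGroup E] [NormedSpace 𝕜 E] (a b : E →L[𝕜] 𝕜) {u : E}
    (ha : a u ≠ 1) (hb : b u ≠ 1) (k m : ℕ) :
    ∑ j ∈ Finset.range (k + 1),
        radialOp (1 : 𝕜) m (fun v => (a v - b v) ^ j / (1 - b v) ^ (j + 1)) u +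
      radialOp (1 : 𝕜) m
        (fun v => (a v - b v) ^ (k + 1) / ((1 - a v) * (1 - b v) ^ (k + 1))) u =
      ((1 - a u) ^ (m + 1))⁻¹ := by
  set term : ℕ → E → 𝕜 := fun j v => (a v - b v) ^ j / (1 - b v) ^ (j + 1)
  set rem : E → 𝕜 := fun v => (a v - b v) ^ (k + 1) / ((1 - a v) * (1 - b v) ^ (k + 1))
  have ha' : 1 - a u ≠ 0 := sub_ne_zero.mpr ha.symm
  have hb' : 1 - b u ≠ 0 := sub_ne_zero.mpr hb.symm
  have ha_an : AnalyticAt 𝕜 a u := a.analyticAt u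
  have hb_an : AnalyticAt 𝕜 b u := b.analyticAt u
  have hterm : ∀ j ∈ Finset.range (k + 1), AnalyticAt 𝕜 (term j) u := fun j _ => by
    simp only [term]
    fun_prop (disch := exact pow_ne_zero _ hb')
  have hrem : AnalyticAt 𝕜 rem u := by
    simp only [rem]
    fun_prop (disch := exact mul_ne_zero ha' (pow_ne_zero _ hb'))
  have hexp : ∑ j ∈ Finset.range (k + 1), term j + rem =ᶠ[𝓝 u] fun v => ((1 - a v) ^ 1)⁻¹ := by
    filter_upwards [a.continuous.continuousAt.eventually_ne ha,
      b.continuous.continuousAt.eventually_ne hb] with v hav hbv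
    simp only [Pi.add_apply, Finset.sum_apply, pow_one, term, rem]
    exact (inv_one_sub_eq_sum_add (sub_ne_zero.mpr hav.symm) (sub_ne_zero.mpr hbv.symm) k).symm
  calc _ = radialOp (1 : 𝕜) m (∑ j ∈ Finset.range (k + 1), term j + rem) u := by
        rw [(radialOp_add 1 (Finset.analyticAt_sum _ hterm) hrem m).eq_of_nhds, Pi.add_apply,
          (radialOp_sum 1 _ hterm m).eq_of_nhds, Finset.sum_apply]
    _ = radialOp (1 : 𝕜) m (fun v => ((1 - a v) ^ 1)⁻¹) u := (hexp.radialOp 1 m).eq_of_nhds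
    _ = ((1 - a u) ^ (m + 1))⁻¹ := by
        simpa [add_comm] using radialOp_inv_one_sub_pow a one_ne_zero m ha

theorem RkBar_eq_conj_radialOp {n : ℕ} (k : ℕ) (t : ℝ) (g : En n → ℂ) (u : En n) :
    RkBar k t g u = starRingEnd ℂ (radialOp (t : ℂ) k (fun v => starRingEnd ℂ (g v)) u) := by
  induction k generalizing u with
  | zero => simp [RkBar, radialOp]
  | succ k ih =>
    simp only [RkBar, radialOp, RbarRad, ih, radialDeriv, Pi.add_apply, Pi.smul_apply,
      smul_eq_mul, map_add, map_mul, map_inv₀, one_div, Complex.conj_ofReal, map_natCast,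
      Complex.conj_conj]

theorem conj_bip {n : ℕ} (z v : En n) : starRingEnd ℂ (bip z v) = inner ℂ z v := by
  simp [bip, PiLp.inner_apply, mul_comm]

theorem inner_ne_one_of_norm_lt_one {𝕜 E : Type*} [RCLike 𝕜] [SeminormedAddCommGroup E]
    [InnerProductSpace 𝕜 E] {x y : E} (hx : ‖x‖ < 1) (hy : ‖y‖ ≤ 1) : inner 𝕜 x y ≠ 1 := by
  intro h
  have hle := norm_inner_le_norm (𝕜 := 𝕜) x y
  rw [h, norm_one] at hle
  nlinarith [norm_nonneg x, norm_nonneg y]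

theorem taylor_kernel_expansion_general (n : ℕ) (k m : ℕ) (hm : 0 < m)
    (z w u : En n) (hz : z ∈ ball (0 : En n) 1) (hw : w ∈ ball (0 : En n) 1)
    (hu : u ∈ ball (0 : En n) 1) :
    1 / (1 - bip z u) ^ m =
      (∑ j ∈ Finset.range (k + 1),
        RkBar (m - 1) 1 (fun v => (bip (z - w) v) ^ j / (1 - bip w v) ^ (j + 1)) u) +
      RkBar (m - 1) 1
        (fun v => (bip (z - w) v) ^ (k + 1) /
          ((1 - bip z v) * (1 - bip w v) ^ (k + 1))) u := by
  rw [mem_ball_zero_iff] at hz hw hu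
  have key := radialOp_taylor_expansion (innerSL ℂ z) (innerSL ℂ w)
    (inner_ne_one_of_norm_lt_one hz hu.le) (inner_ne_one_of_norm_lt_one hw hu.le) k (m - 1)
  rw [Nat.sub_add_cancel hm] at key
  simp only [innerSL_apply_apply] at key
  simp only [RkBar_eq_conj_radialOp, map_div₀, map_pow, map_sub, map_one, map_mul, conj_bip,
    inner_sub_left, Complex.ofReal_one, ← map_sum, ← map_add, key]
  rw [← conj_bip, one_div, map_inv₀, map_pow, map_sub, map_one, Complex.conj_conj]

/-- For positive integers `k`, `m` and `z, w, u` in the open unit ball of `ℂⁿ`: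
`1/(1-⟨z,u⟩)^m = ∑_{j=0}^k R̄^{m-1}_{1,u} [⟨z-w,u⟩^j/(1-⟨w,u⟩)^{j+1}]
  + R̄^{m-1}_{1,u} [⟨z-w,u⟩^{k+1}/((1-⟨z,u⟩)(1-⟨w,u⟩)^{k+1})]`. -/
theorem taylor_kernel_expansion (n : ℕ) (k m : ℕ) (hk : 0 < k) (hm : 0 < m)
    (z w u : En n) (hz : z ∈ ball (0 : En n) 1) (hw : w ∈ ball (0 : En n) 1)
    (hu : u ∈ ball (0 : En n) 1) :
    1 / (1 - bip z u) ^ m =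
      (∑ j ∈ Finset.range (k + 1),
        RkBar (m - 1) 1 (fun v => (bip (z - w) v) ^ j / (1 - bip w v) ^ (j + 1)) u) +
      RkBar (m - 1) 1
        (fun v => (bip (z - w) v) ^ (k + 1) /
          ((1 - bip z v) * (1 - bip w v) ^ (k + 1))) u :=
  taylor_kernel_expansion_general n k m hm z w u hz hw hu
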